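/- arXiv:1704.05355 — 5 statements merged into one kernel-verified Lean document; each statement's English description precedes it below -/
import Mathlib

section
/- Let f(x,y) = β0 + β1 x + β2 y + β3 x y be a bilinear function. For i, j ∈ {0,1} let ψ_{ij} be the bilinear function determined by the corner values ψ_{ij}(δ,ε) = f((i+δ)/2, (j+ε)/2) for δ, ε ∈ {0,1}. Then the area of {(x,y) ∈ [0,1]² : f(x,y) > 0} equals (1/4) · Σ_{i,j ∈ {0,1}} area of {(u,v) ∈ [0,1]² : ψ_{ij}(u,v) > 0}. That is, the volume estimate is consistent under one level of mesh refinement with bilinear interpolation. -/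
open MeasureTheory Pointwise
open scoped ENNReal

/-- The 2D analytical volume estimate is consistent under one level of mesh
refinement with bilinear interpolation: the area of {f > 0} in the unit square
is the average of the areas of {ψ_{ij} > 0} over the four subcells, where
ψ_{ij} is the bilinear function determined by the bilinearly interpolated
corner values of the subcell [i/2,(i+1)/2] × [j/2,(j+1)/2]. -/
theorem bilinear_volume_consistent_one_level
    (β0 β1 β2 β3 : ℝ) (f : ℝ → ℝ → ℝ)
    (hf : ∀ x y : ℝ, f x y = β0 + β1 * x + β2 * y + β3 * (x * y))
    (ψ : Fin 2 → Fin 2 → ℝ → ℝ → ℝ)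
    (hψbil : ∀ i j : Fin 2, ∃ γ0 γ1 γ2 γ3 : ℝ,
      ∀ u v : ℝ, ψ i j u v = γ0 + γ1 * u + γ2 * v + γ3 * (u * v))
    (hψcorner : ∀ i j δ ε : Fin 2,
      ψ i j ((δ : ℕ) : ℝ) ((ε : ℕ) : ℝ)
        = f ((((i : ℕ) : ℝ) + ((δ : ℕ) : ℝ)) / 2)
            ((((j : ℕ) : ℝ) + ((ε : ℕ) : ℝ)) / 2)) :
    volume {p : ℝ × ℝ | p.1 ∈ Set.Icc (0 : ℝ) 1 ∧ p.2 ∈ Set.Icc (0 : ℝ) 1 ∧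
        0 < f p.1 p.2}
      = (1 / 4 : ℝ≥0∞) * ∑ i : Fin 2, ∑ j : Fin 2,
          volume {p : ℝ × ℝ | p.1 ∈ Set.Icc (0 : ℝ) 1 ∧
            p.2 ∈ Set.Icc (0 : ℝ) 1 ∧ 0 < ψ i j p.1 p.2} := by
  -- Step 1: identify ψ i j with the rescaled f.
  have hψ : ∀ (i j : Fin 2) (u v : ℝ),
      ψ i j u v = f ((((i:ℕ):ℝ) + u)/2) ((((j:ℕ):ℝ) + v)/2) := by
    intro i j u v
    obtain ⟨γ0, γ1, γ2, γ3, hγ⟩ := hψbil i j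
    have h00 := hψcorner i j 0 0
    have h10 := hψcorner i j 1 0
    have h01 := hψcorner i j 0 1
    have h11 := hψcorner i j 1 1
    simp only [Fin.val_zero, Fin.val_one, Nat.cast_zero, Nat.cast_one]
      at h00 h10 h01 h11
    rw [hγ, hf] at h00 h10 h01 h11 ⊢
    linear_combination (1-u)*(1-v)*h00 + u*(1-v)*h10 + (1-u)*v*h01 + u*v*h11
  set g : ℝ × ℝ → ℝ := fun p => β0 + β1 * p.1 + β2 * p.2 + β3 * (p.1 * p.2)
    with hg_def
  have hgf : ∀ p : ℝ × ℝ, f p.1 p.2 = g p := fun p => hf p.1 p.2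
  have hg : Measurable g := by fun_prop
  -- subcell pieces of the big set
  set A : Fin 2 → Fin 2 → Set (ℝ × ℝ) := fun i j =>
    {p : ℝ × ℝ | ((i:ℕ):ℝ)/2 ≤ p.1 ∧ p.1 ≤ (((i:ℕ):ℝ)+1)/2 ∧
      ((j:ℕ):ℝ)/2 ≤ p.2 ∧ p.2 ≤ (((j:ℕ):ℝ)+1)/2 ∧ 0 < g p} with hA_def
  set S : Fin 2 → Fin 2 → Set (ℝ × ℝ) := fun i j =>
    {p : ℝ × ℝ | p.1 ∈ Set.Icc (0 : ℝ) 1 ∧ p.2 ∈ Set.Icc (0 : ℝ) 1 ∧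
      0 < ψ i j p.1 p.2} with hS_def
  -- A i j is a translate of the rescaled S i j
  have hAS : ∀ i j : Fin 2,
      A i j = ((((i:ℕ):ℝ)/2, ((j:ℕ):ℝ)/2) : ℝ × ℝ) +ᵥ (1/2 : ℝ) • S i j := by
    intro i j
    ext q
    constructor
    · intro hq
      obtain ⟨h1, h2, h3, h4, h5⟩ := hq
      have hp : ((2*q.1 - ((i:ℕ):ℝ), 2*q.2 - ((j:ℕ):ℝ)) : ℝ × ℝ) ∈ S i j := by
        simp only [hS_def, Set.mem_setOf_eq, Set.mem_Icc]
        refine ⟨⟨by linarith, by linarith⟩, ⟨by linarith, by linarith⟩, ?_⟩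
        rw [hψ]
        have e1 : (((i:ℕ):ℝ) + (2*q.1 - ((i:ℕ):ℝ)))/2 = q.1 := by ring
        have e2 : (((j:ℕ):ℝ) + (2*q.2 - ((j:ℕ):ℝ)))/2 = q.2 := by ring
        rw [e1, e2, hgf]
        exact h5
      have heq : q = ((((i:ℕ):ℝ)/2, ((j:ℕ):ℝ)/2) : ℝ × ℝ)
          +ᵥ (1/2 : ℝ) • ((2*q.1 - ((i:ℕ):ℝ), 2*q.2 - ((j:ℕ):ℝ)) : ℝ × ℝ) := by
        simp only [vadd_eq_add, Prod.smul_mk, smul_eq_mul, Prod.mk_add_mk,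
          Prod.ext_iff]
        constructor <;> · simp; ring
      rw [heq]
      exact Set.vadd_mem_vadd_set (Set.smul_mem_smul_set hp)
    · intro hq
      obtain ⟨b, hb, rfl⟩ := hq
      obtain ⟨p, hp, rfl⟩ := hb
      simp only [hS_def, Set.mem_setOf_eq, Set.mem_Icc] at hp
      obtain ⟨⟨hp1, hp2⟩, ⟨hp3, hp4⟩, hp5⟩ := hp
      simp only [hA_def, Set.mem_setOf_eq, vadd_eq_add, Prod.fst_add,
        Prod.snd_add, Prod.smul_fst, Prod.smul_snd, smul_eq_mul]
      refine ⟨by linarith, by linarith, by linarith, by linarith, ?_⟩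
      rw [hψ, hf] at hp5
      convert hp5 using 1
      simp only [hg_def, Prod.fst_add, Prod.snd_add, Prod.smul_fst,
        Prod.smul_snd, smul_eq_mul]
      ring
  -- hence the areas scale by 1/4
  have hvolA : ∀ i j : Fin 2, volume (A i j) = (1/4 : ℝ≥0∞) * volume (S i j) := by
    intro i j
    rw [hAS i j, measure_vadd, Measure.addHaar_smul]
    congr 1
    norm_num [abs_of_nonneg, ENNReal.ofReal_div_of_pos, ENNReal.ofReal_one,
      ENNReal.ofReal_ofNat]
  -- the big set is the union of the A i j
  have hU : {p : ℝ × ℝ | p.1 ∈ Set.Icc (0 : ℝ) 1 ∧ p.2 ∈ Set.Icc (0 : ℝ) 1 ∧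
      0 < f p.1 p.2} = ⋃ k : Fin 2 × Fin 2, A k.1 k.2 := by
    ext p
    simp only [Set.mem_setOf_eq, Set.mem_Icc, Set.mem_iUnion, hA_def, hgf]
    constructor
    · rintro ⟨⟨h1, h2⟩, ⟨h3, h4⟩, h5⟩
      by_cases hx : p.1 ≤ 1/2 <;> by_cases hy : p.2 ≤ 1/2
      · exact ⟨(0, 0), by norm_num; refine ⟨h1, by linarith, h3, by linarith, h5⟩⟩
      · exact ⟨(0, 1), by norm_num; refine ⟨h1, by linarith, by linarith, h4, h5⟩⟩
      · exact ⟨(1, 0), by norm_num; refine ⟨by linarith, by linarith, h3, by linarith, h5⟩⟩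
      · exact ⟨(1, 1), by norm_num; refine ⟨by linarith, by linarith, by linarith, h4, h5⟩⟩
    · rintro ⟨k, h1, h2, h3, h4, h5⟩
      have hi : ((k.1 : ℕ) : ℝ) ≤ 1 := by
        have := k.1.isLt; exact_mod_cast Nat.lt_succ_iff.mp this
      have hj : ((k.2 : ℕ) : ℝ) ≤ 1 := by
        have := k.2.isLt; exact_mod_cast Nat.lt_succ_iff.mp this
      have hi0 : (0:ℝ) ≤ ((k.1 : ℕ) : ℝ) := Nat.cast_nonneg _
      have hj0 : (0:ℝ) ≤ ((k.2 : ℕ) : ℝ) := Nat.cast_nonneg _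
      exact ⟨⟨by linarith, by linarith⟩, ⟨by linarith, by linarith⟩, h5⟩
  -- measurability of the pieces
  have hAmeas : ∀ i j : Fin 2, MeasurableSet (A i j) := by
    intro i j
    have : A i j = ({p : ℝ × ℝ | ((i:ℕ):ℝ)/2 ≤ p.1} ∩ {p | p.1 ≤ (((i:ℕ):ℝ)+1)/2}
        ∩ {p | ((j:ℕ):ℝ)/2 ≤ p.2} ∩ {p | p.2 ≤ (((j:ℕ):ℝ)+1)/2} ∩ {p | 0 < g p}) := by
      ext p; simp only [hA_def, Set.mem_setOf_eq, Set.mem_inter_iff]; tauto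
    rw [this]
    exact ((((measurableSet_le measurable_const measurable_fst).inter
      (measurableSet_le measurable_fst measurable_const)).inter
      (measurableSet_le measurable_const measurable_snd)).inter
      (measurableSet_le measurable_snd measurable_const)).inter
      (measurableSet_lt measurable_const hg)
  -- null set where subcells can overlap
  have hN : volume ({p : ℝ × ℝ | p.1 = 1/2} ∪ {p : ℝ × ℝ | p.2 = 1/2}) = 0 := by
    apply measure_union_null
    · have : {p : ℝ × ℝ | p.1 = 1/2} = ({(1/2:ℝ)} : Set ℝ) ×ˢ (Set.univ : Set ℝ) := by
        ext ⟨x, y⟩; simp [Set.mem_prod, eq_comm]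
      rw [this, Measure.volume_eq_prod, Measure.prod_prod]
      simp
    · have : {p : ℝ × ℝ | p.2 = 1/2} = (Set.univ : Set ℝ) ×ˢ ({(1/2:ℝ)} : Set ℝ) := by
        ext ⟨x, y⟩; simp [Set.mem_prod, eq_comm]
      rw [this, Measure.volume_eq_prod, Measure.prod_prod]
      simp
  -- a.e. disjointness
  have hdisj : Pairwise (Function.onFun (AEDisjoint volume)
      (fun k : Fin 2 × Fin 2 => A k.1 k.2)) := by
    intro k k' hkk'
    refine measure_mono_null ?_ hN
    intro p hp
    obtain ⟨⟨h1, h2, h3, h4, -⟩, ⟨h1', h2', h3', h4', -⟩⟩ := hp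
    have hor : k.1 ≠ k'.1 ∨ k.2 ≠ k'.2 := by
      by_contra h
      push_neg at h
      exact hkk' (Prod.ext h.1 h.2)
    rcases hor with h | h
    · left
      have hval : (k.1 : ℕ) = 0 ∧ (k'.1 : ℕ) = 1 ∨ (k.1 : ℕ) = 1 ∧ (k'.1 : ℕ) = 0 := by
        have e1 := k.1.isLt; have e2 := k'.1.isLt
        have e3 : (k.1 : ℕ) ≠ (k'.1 : ℕ) := fun hc => h (Fin.ext hc)
        omega
      rcases hval with ⟨ha, hb⟩ | ⟨ha, hb⟩ <;>
        · rw [ha] at h1 h2; rw [hb] at h1' h2'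
          push_cast at h1 h2 h1' h2'
          show p.1 = 1/2
          linarith
    · right
      have hval : (k.2 : ℕ) = 0 ∧ (k'.2 : ℕ) = 1 ∨ (k.2 : ℕ) = 1 ∧ (k'.2 : ℕ) = 0 := by
        have e1 := k.2.isLt; have e2 := k'.2.isLt
        have e3 : (k.2 : ℕ) ≠ (k'.2 : ℕ) := fun hc => h (Fin.ext hc)
        omega
      rcases hval with ⟨ha, hb⟩ | ⟨ha, hb⟩ <;>
        · rw [ha] at h3 h4; rw [hb] at h3' h4'
          push_cast at h3 h4 h3' h4'
          show p.2 = 1/2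
          linarith
  -- put everything together
  rw [hU, measure_iUnion₀ hdisj (fun k => (hAmeas k.1 k.2).nullMeasurableSet),
    tsum_fintype]
  rw [Fintype.sum_prod_type]
  rw [Finset.mul_sum]
  refine Finset.sum_congr rfl fun i _ => ?_
  rw [Finset.mul_sum]
  refine Finset.sum_congr rfl fun j _ => ?_
  exact hvolA i j
end

section
/- Let f(x,y) = β0 + β1 x + β2 y + β3 x y be a bilinear function and ℓ ≥ 0 a natural number. For 0 ≤ i, j ≤ 2^ℓ − 1 let ψ^ℓ_{ij} be the bilinear function determined by the corner values ψ^ℓ_{ij}(δ,ε) = f((i+δ)/2^ℓ, (j+ε)/2^ℓ) for δ, ε ∈ {0,1}. Then the area of {(x,y) ∈ [0,1]² : f(x,y) > 0} equals 4^{−ℓ} · Σ_{i,j=0}^{2^ℓ−1} area of {(u,v) ∈ [0,1]² : ψ^ℓ_{ij}(u,v) > 0}. That is, the analytical volume estimate is consistent under arbitrarily many levels of mesh refinement with bilinear interpolation. -/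
/-!
Uniqueness of bilinear interpolation shows that the refined function `ψ^ℓ_{ij}` is exactly the
restriction of `f` to the subcell `(i,j)`, pulled back to the unit square by the affine map
`q ↦ ((i, j) + q) / 2^ℓ`. That map scales area by `4^{-ℓ}`, and the `4^ℓ` subcells tile the unit
square up to their null boundaries; this part of the argument works for any null-measurable set
in place of `{f > 0}`.
-/

open MeasureTheory Set Function
open scoped ENNReal

def IsBilinearFunction (g : ℝ → ℝ → ℝ) : Prop :=
  ∃ a b c d : ℝ, ∀ u v : ℝ, g u v = a + b * u + c * v + d * (u * v)

namespace IsBilinearFunction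

variable {g h : ℝ → ℝ → ℝ}

theorem continuous_uncurry (hg : IsBilinearFunction g) : Continuous (uncurry g) := by
  obtain ⟨a, b, c, d, hg⟩ := hg
  have : uncurry g = fun p : ℝ × ℝ => a + b * p.1 + c * p.2 + d * (p.1 * p.2) :=
    funext fun p => hg p.1 p.2
  rw [this]
  fun_prop

theorem comp_add_div (hg : IsBilinearFunction g) (x₀ y₀ r : ℝ) :
    IsBilinearFunction fun u v => g ((x₀ + u) / r) ((y₀ + v) / r) := by
  obtain ⟨a, b, c, d, hg⟩ := hg
  exact ⟨a + b * (x₀ / r) + c * (y₀ / r) + d * (x₀ / r * (y₀ / r)),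
    b / r + d * y₀ / r ^ 2, c / r + d * x₀ / r ^ 2, d / r ^ 2,
    fun u v => by simp only [hg]; ring⟩

theorem ext_of_corners (hg : IsBilinearFunction g) (hh : IsBilinearFunction h)
    (hcorner : ∀ δ ε : Fin 2,
      g ((δ : ℕ) : ℝ) ((ε : ℕ) : ℝ) = h ((δ : ℕ) : ℝ) ((ε : ℕ) : ℝ)) :
    g = h := by
  obtain ⟨a, b, c, d, hg⟩ := hg
  obtain ⟨a', b', c', d', hh⟩ := hh
  have h00 := hcorner 0 0
  have h10 := hcorner 1 0
  have h01 := hcorner 0 1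
  have h11 := hcorner 1 1
  simp only [hg, hh, Fin.val_zero, Fin.val_one, Nat.cast_zero, Nat.cast_one] at h00 h10 h01 h11
  funext u v
  rw [hg, hh]
  -- the weights are the bilinear Lagrange basis functions of the four corners
  linear_combination (1 - u - v + u * v) * h00 + (u - u * v) * h10 + (v - u * v) * h01
    + (u * v) * h11

end IsBilinearFunction

noncomputable def cellMap (n i j : ℕ) (q : ℝ × ℝ) : ℝ × ℝ :=
  (((i : ℝ) + q.1) / n, ((j : ℝ) + q.2) / n)

section Grid

variable {n : ℕ}

theorem biUnion_range_Ico_div_eq_Ico (hn : n ≠ 0) :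
    ⋃ i ∈ Finset.range n, Ico ((i : ℝ) / n) ((i + 1) / n) = Ico 0 1 := by
  have hn' : (0 : ℝ) < n := by positivity
  apply Subset.antisymm
  · refine iUnion₂_subset fun i hi => Ico_subset_Ico (by positivity) ?_
    rw [div_le_one hn']
    exact_mod_cast Finset.mem_range.mp hi
  · simpa [hn'.ne'] using Ico_subset_biUnion_Ico n fun k => (k : ℝ) / n

theorem pairwise_disjoint_on_Ico_div :
    Pairwise (Disjoint on fun i : ℕ => Ico ((i : ℝ) / n) ((i + 1) / n)) := by
  have hmono : Monotone fun k : ℕ => (k : ℝ) / n := fun k l hkl =>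
    div_le_div_of_nonneg_right (by exact_mod_cast hkl) n.cast_nonneg
  simpa using hmono.pairwise_disjoint_on_Ico_succ

theorem cellMap_image_unitSquare (hn : n ≠ 0) (i j : ℕ) :
    cellMap n i j '' (Icc 0 1 ×ˢ Icc 0 1) =
      Icc ((i : ℝ) / n) ((i + 1) / n) ×ˢ Icc ((j : ℝ) / n) ((j + 1) / n) := by
  have hn' : (0 : ℝ) < (n : ℝ)⁻¹ := by positivity
  have hcell :
      cellMap n i j = Prod.map ((n : ℝ)⁻¹ * · + i / n) ((n : ℝ)⁻¹ * · + j / n) := by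
    funext q
    simp only [cellMap, Prod.map]
    congr 1 <;> ring
  rw [hcell, prodMap_image_prod, image_affine_Icc' hn', image_affine_Icc' hn']
  congr 1 <;> congr 1 <;> ring

theorem volume_image_cellMap (hn : n ≠ 0) (i j : ℕ) (s : Set (ℝ × ℝ)) :
    volume (cellMap n i j '' s) = ((n : ℝ≥0∞) ^ 2)⁻¹ * volume s := by
  have hcell :
      cellMap n i j = (fun q => (n : ℝ)⁻¹ • q) ∘ (fun q => ((i : ℝ), (j : ℝ)) +ᵥ q) := by
    funext q
    ext <;> simp only [cellMap, comp_apply, vadd_eq_add, Prod.smul_fst, Prod.smul_snd,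
      Prod.fst_add, Prod.snd_add, smul_eq_mul] <;> ring
  rw [hcell, image_comp, image_vadd, image_smul, Measure.addHaar_smul, measure_vadd,
    Module.finrank_prod, Module.finrank_self, inv_pow, abs_inv, abs_pow, Nat.abs_cast,
    ENNReal.ofReal_inv_of_pos (by positivity), ENNReal.ofReal_pow (by positivity),
    ENNReal.ofReal_natCast]

theorem Icc_prod_Icc_ae_eq_Ico_prod_Ico (a b c d : ℝ) :
    (Icc a b ×ˢ Icc c d : Set (ℝ × ℝ)) =ᵐ[volume] Ico a b ×ˢ Ico c d := by
  rw [Measure.volume_eq_prod]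
  exact Measure.set_prod_ae_eq Ico_ae_eq_Icc.symm Ico_ae_eq_Icc.symm

def gridCell (n : ℕ) (q : ℕ × ℕ) : Set (ℝ × ℝ) :=
  Ico ((q.1 : ℝ) / n) ((q.1 + 1) / n) ×ˢ Ico ((q.2 : ℝ) / n) ((q.2 + 1) / n)

theorem biUnion_gridCell_eq (hn : n ≠ 0) :
    ⋃ q ∈ Finset.range n ×ˢ Finset.range n, gridCell n q = Ico 0 1 ×ˢ Ico 0 1 := by
  rw [← biUnion_range_Ico_div_eq_Ico hn, ← Finset.set_biUnion_coe, Finset.coe_product]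
  exact biUnion_prod _ _ (fun i : ℕ => Ico ((i : ℝ) / n) ((i + 1) / n))
    (fun i : ℕ => Ico ((i : ℝ) / n) ((i + 1) / n))

theorem pairwise_disjoint_gridCell : Pairwise (Disjoint on gridCell n) := by
  rintro ⟨i, j⟩ ⟨k, l⟩ hne
  rw [onFun, gridCell, gridCell, disjoint_prod]
  by_cases hik : i = k
  · exact Or.inr (pairwise_disjoint_on_Ico_div fun hjl => hne (Prod.ext hik hjl))
  · exact Or.inl (pairwise_disjoint_on_Ico_div hik)

theorem gridCell_ae_eq_image_cellMap (hn : n ≠ 0) (i j : ℕ) :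
    gridCell n (i, j) =ᵐ[volume] cellMap n i j '' (Icc 0 1 ×ˢ Icc 0 1) := by
  rw [cellMap_image_unitSquare hn]
  exact (Icc_prod_Icc_ae_eq_Ico_prod_Ico _ _ _ _).symm

theorem volume_unitSquare_inter_eq_sum_preimage_cellMap (hn : n ≠ 0) {S : Set (ℝ × ℝ)}
    (hS : NullMeasurableSet S) :
    volume (Icc 0 1 ×ˢ Icc 0 1 ∩ S) = ((n : ℝ≥0∞) ^ 2)⁻¹ *
      ∑ i ∈ Finset.range n, ∑ j ∈ Finset.range n,
        volume (Icc 0 1 ×ˢ Icc 0 1 ∩ cellMap n i j ⁻¹' S) := by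
  have hdisj : ((Finset.range n ×ˢ Finset.range n : Finset (ℕ × ℕ)) : Set (ℕ × ℕ)).Pairwise
      (AEDisjoint volume on fun q => gridCell n q ∩ S) := fun q _ q' _ hne =>
    ((pairwise_disjoint_gridCell hne).mono inter_subset_left inter_subset_left).aedisjoint
  have hmeas : ∀ q ∈ Finset.range n ×ˢ Finset.range n, NullMeasurableSet (gridCell n q ∩ S) :=
    fun _ _ => (measurableSet_Ico.prod measurableSet_Ico).nullMeasurableSet.inter hS
  have hcell : ∀ i j : ℕ, volume (gridCell n (i, j) ∩ S) =
      ((n : ℝ≥0∞) ^ 2)⁻¹ * volume (Icc 0 1 ×ˢ Icc 0 1 ∩ cellMap n i j ⁻¹' S) := fun i j => by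
    rw [← volume_image_cellMap hn, image_inter_preimage]
    exact measure_congr ((gridCell_ae_eq_image_cellMap hn i j).inter (ae_eq_refl S))
  calc volume (Icc 0 1 ×ˢ Icc 0 1 ∩ S)
      = volume (Ico 0 1 ×ˢ Ico 0 1 ∩ S) :=
        measure_congr ((Icc_prod_Icc_ae_eq_Ico_prod_Ico _ _ _ _).inter (ae_eq_refl S))
    _ = ∑ q ∈ Finset.range n ×ˢ Finset.range n, volume (gridCell n q ∩ S) := by
        rw [← biUnion_gridCell_eq hn, iUnion₂_inter, measure_biUnion_finset₀ hdisj hmeas]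
    _ = _ := by
        simp_rw [Finset.sum_product, hcell, Finset.mul_sum]

end Grid

/-- The 2D analytical volume estimate is consistent under ℓ levels of mesh
refinement with bilinear interpolation: the area of {f > 0} in the unit square
equals 4^{−ℓ} times the sum over all 4^ℓ subcells of the areas of
{ψ^ℓ_{ij} > 0}, where ψ^ℓ_{ij} is the bilinear function determined by the
bilinearly interpolated corner values of the subcell
[i/2^ℓ,(i+1)/2^ℓ] × [j/2^ℓ,(j+1)/2^ℓ]. -/
theorem bilinear_volume_consistent_many_levels
    (β0 β1 β2 β3 : ℝ) (f : ℝ → ℝ → ℝ)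
    (hf : ∀ x y : ℝ, f x y = β0 + β1 * x + β2 * y + β3 * (x * y))
    (ℓ : ℕ) (ψ : ℕ → ℕ → ℝ → ℝ → ℝ)
    (hψbil : ∀ i j : ℕ, i < 2 ^ ℓ → j < 2 ^ ℓ → ∃ γ0 γ1 γ2 γ3 : ℝ,
      ∀ u v : ℝ, ψ i j u v = γ0 + γ1 * u + γ2 * v + γ3 * (u * v))
    (hψcorner : ∀ i j : ℕ, i < 2 ^ ℓ → j < 2 ^ ℓ → ∀ δ ε : Fin 2,
      ψ i j ((δ : ℕ) : ℝ) ((ε : ℕ) : ℝ)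
        = f (((i : ℝ) + ((δ : ℕ) : ℝ)) / 2 ^ ℓ)
            (((j : ℝ) + ((ε : ℕ) : ℝ)) / 2 ^ ℓ)) :
    volume {p : ℝ × ℝ | p.1 ∈ Set.Icc (0 : ℝ) 1 ∧ p.2 ∈ Set.Icc (0 : ℝ) 1 ∧
        0 < f p.1 p.2}
      = ((4 : ℝ≥0∞) ^ ℓ)⁻¹ * ∑ i ∈ Finset.range (2 ^ ℓ),
          ∑ j ∈ Finset.range (2 ^ ℓ),
            volume {p : ℝ × ℝ | p.1 ∈ Set.Icc (0 : ℝ) 1 ∧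
              p.2 ∈ Set.Icc (0 : ℝ) 1 ∧ 0 < ψ i j p.1 p.2} := by
  have hf_bil : IsBilinearFunction f := ⟨β0, β1, β2, β3, hf⟩
  have hψ : ∀ i j : ℕ, i < 2 ^ ℓ → j < 2 ^ ℓ →
      ψ i j = fun u v => f (((i : ℝ) + u) / 2 ^ ℓ) (((j : ℝ) + v) / 2 ^ ℓ) := fun i j hi hj =>
    IsBilinearFunction.ext_of_corners (hψbil i j hi hj) (hf_bil.comp_add_div _ _ _)
      (hψcorner i j hi hj)
  have hS : MeasurableSet {p : ℝ × ℝ | 0 < f p.1 p.2} :=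
    (isOpen_lt continuous_const hf_bil.continuous_uncurry).measurableSet
  have hgrid : (((2 ^ ℓ : ℕ) : ℝ≥0∞) ^ 2) = 4 ^ ℓ := by
    push_cast
    rw [← pow_mul, mul_comm, pow_mul]
    norm_num
  have key := volume_unitSquare_inter_eq_sum_preimage_cellMap (n := 2 ^ ℓ) (by positivity)
    hS.nullMeasurableSet
  rw [hgrid] at key
  convert key using 2
  · ext p
    simp only [mem_inter_iff, mem_prod, mem_ofPred_eq, and_assoc]
  · refine Finset.sum_congr rfl fun i hi => Finset.sum_congr rfl fun j hj => ?_
    congr 1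
    rw [hψ i j (Finset.mem_range.mp hi) (Finset.mem_range.mp hj)]
    ext p
    simp only [mem_inter_iff, mem_prod, mem_preimage, mem_ofPred_eq, cellMap, Nat.cast_pow,
      Nat.cast_ofNat, and_assoc]
end

section
/- Let f(x,y,z) = β0 + β1 x + β2 y + β3 z + β4 x y + β5 y z + β6 x z + β7 x y z be a trilinear function. For i, j, k ∈ {0,1} let ψ_{ijk} be the trilinear function determined by the corner values ψ_{ijk}(δ,ε,ζ) = f((i+δ)/2, (j+ε)/2, (k+ζ)/2) for δ, ε, ζ ∈ {0,1}. Then the volume of {(x,y,z) ∈ [0,1]³ : f(x,y,z) > 0} equals (1/8) · Σ_{i,j,k ∈ {0,1}} volume of {(u,v,w) ∈ [0,1]³ : ψ_{ijk}(u,v,w) > 0}. That is, the 3D volume estimate is consistent under one level of mesh refinement with trilinear interpolation. -/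
open MeasureTheory
open scoped ENNReal

instance : (volume : Measure (ℝ × ℝ × ℝ)).IsAddHaarMeasure :=
  Measure.prod.instIsAddHaarMeasure _ _

/-- The 3D analytical volume estimate is consistent under one level of mesh
refinement with trilinear interpolation: the volume of {f > 0} in the unit
cube is the average over the eight subcells of the volumes of {ψ_{ijk} > 0},
where ψ_{ijk} is the trilinear function determined by the trilinearly
interpolated corner values of the subcell. -/
theorem trilinear_volume_consistent_one_level
    (β0 β1 β2 β3 β4 β5 β6 β7 : ℝ) (f : ℝ → ℝ → ℝ → ℝ)
    (hf : ∀ x y z : ℝ, f x y z =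
      β0 + β1 * x + β2 * y + β3 * z + β4 * (x * y) + β5 * (y * z)
        + β6 * (x * z) + β7 * (x * y * z))
    (ψ : Fin 2 → Fin 2 → Fin 2 → ℝ → ℝ → ℝ → ℝ)
    (hψtril : ∀ i j k : Fin 2, ∃ γ0 γ1 γ2 γ3 γ4 γ5 γ6 γ7 : ℝ,
      ∀ u v w : ℝ, ψ i j k u v w =
        γ0 + γ1 * u + γ2 * v + γ3 * w + γ4 * (u * v) + γ5 * (v * w)
          + γ6 * (u * w) + γ7 * (u * v * w))
    (hψcorner : ∀ i j k δ ε ζ : Fin 2,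
      ψ i j k ((δ : ℕ) : ℝ) ((ε : ℕ) : ℝ) ((ζ : ℕ) : ℝ)
        = f ((((i : ℕ) : ℝ) + ((δ : ℕ) : ℝ)) / 2)
            ((((j : ℕ) : ℝ) + ((ε : ℕ) : ℝ)) / 2)
            ((((k : ℕ) : ℝ) + ((ζ : ℕ) : ℝ)) / 2)) :
    volume {p : ℝ × ℝ × ℝ | p.1 ∈ Set.Icc (0 : ℝ) 1 ∧
        p.2.1 ∈ Set.Icc (0 : ℝ) 1 ∧ p.2.2 ∈ Set.Icc (0 : ℝ) 1 ∧
        0 < f p.1 p.2.1 p.2.2}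
      = (1 / 8 : ℝ≥0∞) * ∑ i : Fin 2, ∑ j : Fin 2, ∑ k : Fin 2,
          volume {p : ℝ × ℝ × ℝ | p.1 ∈ Set.Icc (0 : ℝ) 1 ∧
            p.2.1 ∈ Set.Icc (0 : ℝ) 1 ∧ p.2.2 ∈ Set.Icc (0 : ℝ) 1 ∧
            0 < ψ i j k p.1 p.2.1 p.2.2} := by
  -- notation for the coordinate of a Fin 2 index
  set I : Fin 2 → ℝ := fun i => ((i : ℕ) : ℝ) with hI
  -- ψ is f composed with the affine subcell map
  have key : ∀ (i j k : Fin 2) (u v w : ℝ),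
      ψ i j k u v w = f ((I i + u) / 2) ((I j + v) / 2) ((I k + w) / 2) := by
    intro i j k
    obtain ⟨γ0, γ1, γ2, γ3, γ4, γ5, γ6, γ7, hγ⟩ := hψtril i j k
    have h := fun δ ε ζ => hψcorner i j k δ ε ζ
    have h000 := h 0 0 0; have h100 := h 1 0 0; have h010 := h 0 1 0
    have h001 := h 0 0 1; have h110 := h 1 1 0; have h101 := h 1 0 1
    have h011 := h 0 1 1; have h111 := h 1 1 1
    simp only [Fin.val_zero, Fin.val_one, Nat.cast_zero, Nat.cast_one, hγ, hf]
      at h000 h100 h010 h001 h110 h101 h011 h111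
    intro u v w
    rw [hγ, hf]
    simp only [hI]
    linear_combination (1-u)*(1-v)*(1-w)*h000 + u*(1-v)*(1-w)*h100
      + (1-u)*v*(1-w)*h010 + (1-u)*(1-v)*w*h001 + u*v*(1-w)*h110
      + u*(1-v)*w*h101 + (1-u)*v*w*h011 + u*v*w*h111
  -- the subcell pieces of {f > 0}
  set B : Fin 2 → Fin 2 → Fin 2 → Set (ℝ × ℝ × ℝ) := fun i j k =>
    {p : ℝ × ℝ × ℝ | p.1 ∈ Set.Icc (I i / 2) ((I i + 1) / 2) ∧
      p.2.1 ∈ Set.Icc (I j / 2) ((I j + 1) / 2) ∧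
      p.2.2 ∈ Set.Icc (I k / 2) ((I k + 1) / 2) ∧
      0 < f p.1 p.2.1 p.2.2} with hB
  -- continuity / measurability
  have cont : Continuous fun p : ℝ × ℝ × ℝ => f p.1 p.2.1 p.2.2 := by
    have : (fun p : ℝ × ℝ × ℝ => f p.1 p.2.1 p.2.2)
        = fun p : ℝ × ℝ × ℝ => β0 + β1 * p.1 + β2 * p.2.1 + β3 * p.2.2
          + β4 * (p.1 * p.2.1) + β5 * (p.2.1 * p.2.2) + β6 * (p.1 * p.2.2)
          + β7 * (p.1 * p.2.1 * p.2.2) := by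
      funext p; rw [hf]
    rw [this]; fun_prop
  have hBmeas : ∀ i j k : Fin 2, MeasurableSet (B i j k) := by
    intro i j k
    have : B i j k = (Set.Icc (I i / 2) ((I i + 1) / 2) ×ˢ
        (Set.Icc (I j / 2) ((I j + 1) / 2) ×ˢ Set.Icc (I k / 2) ((I k + 1) / 2)))
        ∩ ((fun p : ℝ × ℝ × ℝ => f p.1 p.2.1 p.2.2) ⁻¹' Set.Ioi 0) := by
      ext p
      simp only [hB, Set.mem_setOf_eq, Set.mem_inter_iff, Set.mem_prod, Set.mem_preimage,
        Set.mem_Ioi]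
      tauto
    rw [this]
    exact (measurableSet_Icc.prod (measurableSet_Icc.prod measurableSet_Icc)).inter
      (cont.measurable measurableSet_Ioi)
  -- each subcell volume equals 8 times the corresponding piece
  have hscale : ∀ i j k : Fin 2,
      volume {p : ℝ × ℝ × ℝ | p.1 ∈ Set.Icc (0 : ℝ) 1 ∧
        p.2.1 ∈ Set.Icc (0 : ℝ) 1 ∧ p.2.2 ∈ Set.Icc (0 : ℝ) 1 ∧
        0 < ψ i j k p.1 p.2.1 p.2.2} = 8 * volume (B i j k) := by
    intro i j k
    have hset : {p : ℝ × ℝ × ℝ | p.1 ∈ Set.Icc (0 : ℝ) 1 ∧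
        p.2.1 ∈ Set.Icc (0 : ℝ) 1 ∧ p.2.2 ∈ Set.Icc (0 : ℝ) 1 ∧
        0 < ψ i j k p.1 p.2.1 p.2.2}
        = (fun p : ℝ × ℝ × ℝ =>
            ((I i / 2, I j / 2, I k / 2) : ℝ × ℝ × ℝ) + (2 : ℝ)⁻¹ • p) ⁻¹' B i j k := by
      ext p
      have harg1 : I i / 2 + 2⁻¹ * p.1 = (I i + p.1) / 2 := by ring
      have harg2 : I j / 2 + 2⁻¹ * p.2.1 = (I j + p.2.1) / 2 := by ring
      have harg3 : I k / 2 + 2⁻¹ * p.2.2 = (I k + p.2.2) / 2 := by ring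
      simp only [Set.mem_preimage, hB, Set.mem_setOf_eq, Prod.mk_add_mk, Prod.smul_mk,
        Prod.fst_add, Prod.snd_add, Prod.smul_fst, Prod.smul_snd, smul_eq_mul,
        Set.mem_Icc, harg1, harg2, harg3, key i j k]
      constructor
      · rintro ⟨⟨a1, a2⟩, ⟨b1, b2⟩, ⟨c1, c2⟩, hpos⟩
        exact ⟨⟨by linarith, by linarith⟩, ⟨by linarith, by linarith⟩,
          ⟨by linarith, by linarith⟩, hpos⟩
      · rintro ⟨⟨a1, a2⟩, ⟨b1, b2⟩, ⟨c1, c2⟩, hpos⟩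
        exact ⟨⟨by linarith, by linarith⟩, ⟨by linarith, by linarith⟩,
          ⟨by linarith, by linarith⟩, hpos⟩
    rw [hset]
    have hcomp : (fun p : ℝ × ℝ × ℝ =>
        ((I i / 2, I j / 2, I k / 2) : ℝ × ℝ × ℝ) + (2 : ℝ)⁻¹ • p) ⁻¹' B i j k
        = ((2 : ℝ)⁻¹ • · : ℝ × ℝ × ℝ → ℝ × ℝ × ℝ) ⁻¹'
          ((((I i / 2, I j / 2, I k / 2) : ℝ × ℝ × ℝ) + ·) ⁻¹' B i j k) := rfl
    rw [hcomp, Measure.addHaar_preimage_smul volume (by norm_num : (2:ℝ)⁻¹ ≠ 0),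
      measure_preimage_add]
    norm_num [Module.finrank_self, Module.finrank_prod]
  -- the interval [0,1] splits into the two half intervals
  have hI0 : I 0 = 0 := by simp [hI]
  have hI1 : I 1 = 1 := by norm_num [hI]
  have hIbd : ∀ i : Fin 2, 0 ≤ I i ∧ I i ≤ 1 := by
    intro i
    constructor
    · simp only [hI]; positivity
    · simp only [hI]; exact_mod_cast Fin.is_le i
  have hhalf : ∀ t : ℝ, t ∈ Set.Icc (0:ℝ) 1 ↔
      ∃ i : Fin 2, t ∈ Set.Icc (I i / 2) ((I i + 1) / 2) := by
    intro t
    constructor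
    · rintro ⟨h0, h1⟩
      rcases le_or_gt t (1/2) with h | h
      · exact ⟨0, by rw [Set.mem_Icc, hI0]; constructor <;> linarith⟩
      · exact ⟨1, by rw [Set.mem_Icc, hI1]; constructor <;> linarith⟩
    · rintro ⟨i, h0, h1⟩
      obtain ⟨hb0, hb1⟩ := hIbd i
      exact Set.mem_Icc.mpr ⟨by linarith, by linarith⟩
  -- the big set is the union of the pieces
  have hunion : {p : ℝ × ℝ × ℝ | p.1 ∈ Set.Icc (0 : ℝ) 1 ∧
      p.2.1 ∈ Set.Icc (0 : ℝ) 1 ∧ p.2.2 ∈ Set.Icc (0 : ℝ) 1 ∧ 0 < f p.1 p.2.1 p.2.2}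
      = ⋃ x ∈ (Finset.univ : Finset (Fin 2 × Fin 2 × Fin 2)), B x.1 x.2.1 x.2.2 := by
    ext p
    simp only [Set.mem_setOf_eq, Set.mem_iUnion, Finset.mem_univ, exists_prop, true_and, hB]
    constructor
    · rintro ⟨h1, h2, h3, h4⟩
      obtain ⟨i, hi⟩ := (hhalf p.1).1 h1
      obtain ⟨j, hj⟩ := (hhalf p.2.1).1 h2
      obtain ⟨k, hk⟩ := (hhalf p.2.2).1 h3
      exact ⟨(i, j, k), hi, hj, hk, h4⟩
    · rintro ⟨⟨i, j, k⟩, h1, h2, h3, h4⟩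
      exact ⟨(hhalf p.1).2 ⟨i, h1⟩, (hhalf p.2.1).2 ⟨j, h2⟩, (hhalf p.2.2).2 ⟨k, h3⟩, h4⟩
  -- hyperplanes are null
  have hnull1 : volume {p : ℝ × ℝ × ℝ | p.1 = 1/2} = 0 := by
    have : {p : ℝ × ℝ × ℝ | p.1 = 1/2}
        = ({(1/2:ℝ)} : Set ℝ) ×ˢ (Set.univ : Set (ℝ × ℝ)) := by
      ext ⟨x, y, z⟩; simp [eq_comm]
    rw [this, Measure.volume_eq_prod, Measure.prod_prod]; simp
  have hnull2 : volume {p : ℝ × ℝ × ℝ | p.2.1 = 1/2} = 0 := by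
    have : {p : ℝ × ℝ × ℝ | p.2.1 = 1/2}
        = (Set.univ : Set ℝ) ×ˢ (({(1/2:ℝ)} : Set ℝ) ×ˢ (Set.univ : Set ℝ)) := by
      ext ⟨x, y, z⟩; simp [eq_comm]
    rw [this, Measure.volume_eq_prod, Measure.volume_eq_prod, Measure.prod_prod, Measure.prod_prod]; simp
  have hnull3 : volume {p : ℝ × ℝ × ℝ | p.2.2 = 1/2} = 0 := by
    have : {p : ℝ × ℝ × ℝ | p.2.2 = 1/2}
        = (Set.univ : Set ℝ) ×ˢ ((Set.univ : Set ℝ) ×ˢ ({(1/2:ℝ)} : Set ℝ)) := by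
      ext ⟨x, y, z⟩; simp [eq_comm]
    rw [this, Measure.volume_eq_prod, Measure.volume_eq_prod, Measure.prod_prod, Measure.prod_prod]; simp
  -- distinct half intervals meet only at 1/2
  have hmeet : ∀ i i' : Fin 2, i ≠ i' → ∀ t : ℝ,
      t ∈ Set.Icc (I i / 2) ((I i + 1) / 2) → t ∈ Set.Icc (I i' / 2) ((I i' + 1) / 2) →
      t = 1/2 := by
    intro i i' hne t ht ht'
    rw [Set.mem_Icc] at ht ht'
    simp only [hI] at ht ht'
    have hv : (i : ℕ) ≠ (i' : ℕ) := fun h => hne (Fin.ext h)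
    have hlt := i.isLt
    have hlt' := i'.isLt
    have hc : ((i : ℕ) = 0 ∧ (i' : ℕ) = 1) ∨ ((i : ℕ) = 1 ∧ (i' : ℕ) = 0) := by omega
    rcases hc with ⟨h1, h2⟩ | ⟨h1, h2⟩ <;> rw [h1] at ht <;> rw [h2] at ht' <;>
      push_cast at ht ht' <;> linarith [ht.1, ht.2, ht'.1, ht'.2]
  -- pieces are a.e. disjoint
  have hdisj : ∀ x y : Fin 2 × Fin 2 × Fin 2, x ≠ y →
      MeasureTheory.AEDisjoint volume (B x.1 x.2.1 x.2.2) (B y.1 y.2.1 y.2.2) := by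
    rintro ⟨i, j, k⟩ ⟨i', j', k'⟩ hne
    have hcase : i ≠ i' ∨ j ≠ j' ∨ k ≠ k' := by
      by_contra h
      push_neg at h
      exact hne (by simp [h.1, h.2.1, h.2.2])
    rcases hcase with h | h | h
    · refine measure_mono_null ?_ hnull1
      rintro p ⟨hp, hp'⟩
      exact hmeet i i' h p.1 hp.1 hp'.1
    · refine measure_mono_null ?_ hnull2
      rintro p ⟨hp, hp'⟩
      exact hmeet j j' h p.2.1 hp.2.1 hp'.2.1
    · refine measure_mono_null ?_ hnull3
      rintro p ⟨hp, hp'⟩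
      exact hmeet k k' h p.2.2 hp.2.2.1 hp'.2.2.1
  -- put everything together
  have hsum : volume {p : ℝ × ℝ × ℝ | p.1 ∈ Set.Icc (0 : ℝ) 1 ∧
      p.2.1 ∈ Set.Icc (0 : ℝ) 1 ∧ p.2.2 ∈ Set.Icc (0 : ℝ) 1 ∧ 0 < f p.1 p.2.1 p.2.2}
      = ∑ i : Fin 2, ∑ j : Fin 2, ∑ k : Fin 2, volume (B i j k) := by
    rw [hunion, measure_biUnion_finset₀ (fun x _ y _ hxy => hdisj x y hxy)
      (fun x _ => (hBmeas x.1 x.2.1 x.2.2).nullMeasurableSet)]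
    rw [Fintype.sum_prod_type]
    congr 1
    funext i
    rw [Fintype.sum_prod_type]
  rw [hsum]
  have : ∀ i j k : Fin 2,
      volume {p : ℝ × ℝ × ℝ | p.1 ∈ Set.Icc (0 : ℝ) 1 ∧
        p.2.1 ∈ Set.Icc (0 : ℝ) 1 ∧ p.2.2 ∈ Set.Icc (0 : ℝ) 1 ∧
        0 < ψ i j k p.1 p.2.1 p.2.2} = 8 * volume (B i j k) := hscale
  simp only [this, ← Finset.mul_sum]
  rw [← mul_assoc, one_div, ENNReal.inv_mul_cancel (by norm_num) (by norm_num), one_mul]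
end

section
/- Let f(x,y,z) = β0 + β1 x + β2 y + β3 z + β4 x y + β5 y z + β6 x z + β7 x y z be a trilinear function and ℓ ≥ 0 a natural number. For 0 ≤ i, j, k ≤ 2^ℓ − 1 let ψ^ℓ_{ijk} be the trilinear function determined by the corner values ψ^ℓ_{ijk}(δ,ε,ζ) = f((i+δ)/2^ℓ, (j+ε)/2^ℓ, (k+ζ)/2^ℓ) for δ, ε, ζ ∈ {0,1}. Then the volume of {(x,y,z) ∈ [0,1]³ : f(x,y,z) > 0} equals 8^{−ℓ} · Σ_{i,j,k=0}^{2^ℓ−1} volume of {(u,v,w) ∈ [0,1]³ : ψ^ℓ_{ijk}(u,v,w) > 0}. -/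
/-!
On each subcell, `ψ i j k` and `f` composed with the affine map `(u, v, w) ↦ ((i + u) / 2 ^ ℓ, …)`
onto that subcell are trilinear functions with the same eight corner values, so they coincide.
Hence `{ψ i j k > 0}` in the unit cube is the preimage of `{f > 0}` in the subcell under this map,
whose volume is `8 ^ ℓ` times larger. Summing over the subcells, which tile the half-open unit
cube, gives the claim; the closed and the half-open cube differ by a null set.
-/

open MeasureTheory
open scoped ENNReal

open Set Function

section Trilinear

variable {R : Type*} [CommRing R]

def IsTrilinear (g : R → R → R → R) : Prop :=
  ∃ c0 c1 c2 c3 c4 c5 c6 c7 : R, ∀ u v w : R, g u v w =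
    c0 + c1 * u + c2 * v + c3 * w + c4 * (u * v) + c5 * (v * w) + c6 * (u * w) + c7 * (u * v * w)

namespace IsTrilinear

variable {g h : R → R → R → R}

theorem eq_corner_interpolation (hg : IsTrilinear g) (u v w : R) :
    g u v w =
      (1 - u) * (1 - v) * (1 - w) * g 0 0 0 + u * (1 - v) * (1 - w) * g 1 0 0
      + (1 - u) * v * (1 - w) * g 0 1 0 + (1 - u) * (1 - v) * w * g 0 0 1
      + u * v * (1 - w) * g 1 1 0 + (1 - u) * v * w * g 0 1 1
      + u * (1 - v) * w * g 1 0 1 + u * v * w * g 1 1 1 := by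
  obtain ⟨c0, c1, c2, c3, c4, c5, c6, c7, hc⟩ := hg
  simp only [hc]
  ring

theorem eq_of_corners (hg : IsTrilinear g) (hh : IsTrilinear h)
    (hgh : ∀ δ ε ζ : Fin 2, g (δ : ℕ) (ε : ℕ) (ζ : ℕ) = h (δ : ℕ) (ε : ℕ) (ζ : ℕ)) : g = h := by
  simp only [Fin.forall_fin_two, Fin.val_zero, Fin.val_one, Nat.cast_zero, Nat.cast_one] at hgh
  obtain ⟨⟨⟨h000, h001⟩, h010, h011⟩, ⟨h100, h101⟩, h110, h111⟩ := hgh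
  funext u v w
  rw [hg.eq_corner_interpolation, hh.eq_corner_interpolation, h000, h001, h010, h011, h100, h101,
    h110, h111]

theorem comp_affine (hg : IsTrilinear g) (a₁ b₁ a₂ b₂ a₃ b₃ : R) :
    IsTrilinear fun u v w => g (a₁ * u + b₁) (a₂ * v + b₂) (a₃ * w + b₃) := by
  obtain ⟨c0, c1, c2, c3, c4, c5, c6, c7, hc⟩ := hg
  refine ⟨c0 + c1 * b₁ + c2 * b₂ + c3 * b₃ + c4 * (b₁ * b₂) + c5 * (b₂ * b₃) + c6 * (b₁ * b₃)
      + c7 * (b₁ * b₂ * b₃),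
    a₁ * (c1 + c4 * b₂ + c6 * b₃ + c7 * (b₂ * b₃)),
    a₂ * (c2 + c4 * b₁ + c5 * b₃ + c7 * (b₁ * b₃)),
    a₃ * (c3 + c5 * b₂ + c6 * b₁ + c7 * (b₁ * b₂)),
    a₁ * a₂ * (c4 + c7 * b₃), a₂ * a₃ * (c5 + c7 * b₁), a₁ * a₃ * (c6 + c7 * b₂),
    a₁ * a₂ * a₃ * c7, fun u v w => ?_⟩
  simp only [hc]
  ring

theorem continuous [TopologicalSpace R] [IsTopologicalRing R] (hg : IsTrilinear g) :
    Continuous fun p : R × R × R => g p.1 p.2.1 p.2.2 := by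
  obtain ⟨c0, c1, c2, c3, c4, c5, c6, c7, hc⟩ := hg
  simp only [hc]
  fun_prop

end IsTrilinear

end Trilinear

theorem Ico_zero_one_eq_biUnion_Ico_div {n : ℕ} (hn : 0 < n) :
    Ico (0 : ℝ) 1 = ⋃ i ∈ Finset.range n, Ico (i / n : ℝ) ((i + 1) / n) := by
  have hmono : Monotone fun i : ℕ => (i / n : ℝ) := Nat.mono_cast.div_const n.cast_nonneg
  apply Subset.antisymm
  · simpa [hn.ne'] using Ico_subset_biUnion_Ico n fun i : ℕ => (i / n : ℝ)
  · simp only [Finset.mem_range, iUnion_subset_iff]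
    intro i hi
    have := Ico_subset_Ico (hmono (Nat.zero_le i)) (hmono hi)
    simpa [hn.ne'] using this

theorem pairwise_disjoint_Ico_div (n : ℕ) :
    Pairwise (Disjoint on fun i : ℕ => Ico (i / n : ℝ) ((i + 1) / n)) := by
  simpa using (Nat.mono_cast.div_const n.cast_nonneg : Monotone fun i : ℕ => (i / n : ℝ))
    |>.pairwise_disjoint_on_Ico_succ

theorem measure_biUnion_prod3_inter {α β γ ι κ ν : Type*} [MeasurableSpace α] [MeasurableSpace β]
    [MeasurableSpace γ] (μ : Measure (α × β × γ)) {A : ι → Set α} {B : κ → Set β} {C : ν → Set γ}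
    (hA : Pairwise (Disjoint on A)) (hB : Pairwise (Disjoint on B)) (hC : Pairwise (Disjoint on C))
    (hAm : ∀ i, MeasurableSet (A i)) (hBm : ∀ j, MeasurableSet (B j))
    (hCm : ∀ k, MeasurableSet (C k)) {S : Set (α × β × γ)} (hS : MeasurableSet S)
    (s : Finset ι) (t : Finset κ) (u : Finset ν) :
    μ ((⋃ i ∈ s, A i) ×ˢ (⋃ j ∈ t, B j) ×ˢ (⋃ k ∈ u, C k) ∩ S)
      = ∑ i ∈ s, ∑ j ∈ t, ∑ k ∈ u, μ (A i ×ˢ B j ×ˢ C k ∩ S) := by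
  have hunion : (⋃ i ∈ s, A i) ×ˢ (⋃ j ∈ t, B j) ×ˢ (⋃ k ∈ u, C k) ∩ S
      = ⋃ q ∈ s ×ˢ t ×ˢ u, A q.1 ×ˢ B q.2.1 ×ˢ C q.2.2 ∩ S := by
    ext ⟨x, y, z⟩
    simp only [mem_inter_iff, mem_prod, mem_iUnion, Finset.mem_product, exists_prop,
      Prod.exists]
    aesop
  have hdisj : (↑(s ×ˢ t ×ˢ u) : Set (ι × κ × ν)).PairwiseDisjoint
      fun q => A q.1 ×ˢ B q.2.1 ×ˢ C q.2.2 ∩ S := by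
    rintro ⟨i, j, k⟩ - ⟨i', j', k'⟩ - hne
    refine Disjoint.mono inter_subset_left inter_subset_left ?_
    simp only [disjoint_prod]
    by_cases hi : i = i'
    · by_cases hj : j = j'
      · exact Or.inr (Or.inr (hC fun hk => hne (by subst hi hj hk; rfl)))
      · exact Or.inr (Or.inl (hB hj))
    · exact Or.inl (hA hi)
  rw [hunion, measure_biUnion_finset hdisj fun q _ =>
    ((hAm q.1).prod ((hBm q.2.1).prod (hCm q.2.2))).inter hS]
  simp only [Finset.sum_product]

theorem volume_Ico_cube_inter_eq_sum_cells {n : ℕ} (hn : 0 < n) {S : Set (ℝ × ℝ × ℝ)}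
    (hS : MeasurableSet S) :
    volume (Ico (0 : ℝ) 1 ×ˢ Ico (0 : ℝ) 1 ×ˢ Ico (0 : ℝ) 1 ∩ S)
      = ∑ i ∈ Finset.range n, ∑ j ∈ Finset.range n, ∑ k ∈ Finset.range n,
          volume (Ico (i / n : ℝ) ((i + 1) / n) ×ˢ Ico (j / n : ℝ) ((j + 1) / n)
            ×ˢ Ico (k / n : ℝ) ((k + 1) / n) ∩ S) := by
  rw [Ico_zero_one_eq_biUnion_Ico_div hn]
  exact measure_biUnion_prod3_inter volume (pairwise_disjoint_Ico_div n)
    (pairwise_disjoint_Ico_div n) (pairwise_disjoint_Ico_div n) (fun _ => measurableSet_Ico)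
    (fun _ => measurableSet_Ico) (fun _ => measurableSet_Ico) hS _ _ _

theorem volume_Icc_prod3_inter_eq_Ico (a₁ b₁ a₂ b₂ a₃ b₃ : ℝ) (S : Set (ℝ × ℝ × ℝ)) :
    volume (Icc a₁ b₁ ×ˢ Icc a₂ b₂ ×ˢ Icc a₃ b₃ ∩ S)
      = volume (Ico a₁ b₁ ×ˢ Ico a₂ b₂ ×ˢ Ico a₃ b₃ ∩ S) := by
  rw [Measure.volume_eq_prod, Measure.volume_eq_prod]
  exact measure_congr <| (Measure.set_prod_ae_eq Ico_ae_eq_Icc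
    (Measure.set_prod_ae_eq Ico_ae_eq_Icc Ico_ae_eq_Icc)).symm.inter Filter.EventuallyEq.rfl

theorem MeasureTheory.Measure.addHaar_preimage_smul_add {E : Type*} [NormedAddCommGroup E]
    [NormedSpace ℝ E] [MeasurableSpace E] [BorelSpace E] [FiniteDimensional ℝ E] (μ : Measure E)
    [μ.IsAddHaarMeasure] {r : ℝ} (hr : r ≠ 0) (v : E) (X : Set E) :
    μ ((fun p => r • (v + p)) ⁻¹' X) = ENNReal.ofReal |(r ^ Module.finrank ℝ E)⁻¹| * μ X := by
  rw [show (fun p => r • (v + p)) = (r • ·) ∘ (v + ·) from rfl, preimage_comp,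
    measure_preimage_add, Measure.addHaar_preimage_smul μ hr]

theorem volume_Ico_cube_inter_preimage {h : ℝ} (hh : 0 < h) (a b c : ℝ) (S : Set (ℝ × ℝ × ℝ)) :
    volume (Ico (0 : ℝ) 1 ×ˢ Ico (0 : ℝ) 1 ×ˢ Ico (0 : ℝ) 1
        ∩ (fun p : ℝ × ℝ × ℝ => ((a + p.1) / h, (b + p.2.1) / h, (c + p.2.2) / h)) ⁻¹' S)
      = ENNReal.ofReal (h ^ 3)
        * volume (Ico (a / h) ((a + 1) / h) ×ˢ Ico (b / h) ((b + 1) / h) ×ˢ Ico (c / h) ((c + 1) / h)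
          ∩ S) := by
  have : (volume : Measure (ℝ × ℝ × ℝ)).IsAddHaarMeasure := by
    rw [Measure.volume_eq_prod]; infer_instance
  have hmem (x y : ℝ) : (x + y) / h ∈ Ico (x / h) ((x + 1) / h) ↔ y ∈ Ico 0 1 := by
    simp only [mem_Ico, div_le_div_iff_of_pos_right hh, div_lt_div_iff_of_pos_right hh]
    constructor <;> rintro ⟨h1, h2⟩ <;> constructor <;> linarith
  have hset : Ico (0 : ℝ) 1 ×ˢ Ico (0 : ℝ) 1 ×ˢ Ico (0 : ℝ) 1
        ∩ (fun p : ℝ × ℝ × ℝ => ((a + p.1) / h, (b + p.2.1) / h, (c + p.2.2) / h)) ⁻¹' S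
      = (fun p => h⁻¹ • ((a, b, c) + p)) ⁻¹'
        (Ico (a / h) ((a + 1) / h) ×ˢ Ico (b / h) ((b + 1) / h) ×ˢ Ico (c / h) ((c + 1) / h)
          ∩ S) := by
    ext ⟨x, y, z⟩
    simp only [mem_inter_iff, mem_preimage, mem_prod, Prod.smul_mk, Prod.mk_add_mk, smul_eq_mul,
      inv_mul_eq_div, hmem]
  rw [hset, Measure.addHaar_preimage_smul_add _ (inv_ne_zero hh.ne'), inv_pow, inv_inv,
    Module.finrank_prod, Module.finrank_prod, Module.finrank_self]
  norm_num [abs_of_pos hh]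

theorem setOf_mem_prod3_and {α β γ : Type*} (A : Set α) (B : Set β) (C : Set γ)
    (P : α × β × γ → Prop) :
    {p | p.1 ∈ A ∧ p.2.1 ∈ B ∧ p.2.2 ∈ C ∧ P p} = A ×ˢ B ×ˢ C ∩ {p | P p} := by
  ext
  simp [and_assoc]

/-- The 3D analytical volume estimate is consistent under ℓ levels of mesh
refinement with trilinear interpolation: the volume of {f > 0} in the unit
cube equals 8^{−ℓ} times the sum over all 8^ℓ subcells of the volumes of
{ψ^ℓ_{ijk} > 0}. -/
theorem trilinear_volume_consistent_many_levels
    (β0 β1 β2 β3 β4 β5 β6 β7 : ℝ) (f : ℝ → ℝ → ℝ → ℝ)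
    (hf : ∀ x y z : ℝ, f x y z =
      β0 + β1 * x + β2 * y + β3 * z + β4 * (x * y) + β5 * (y * z)
        + β6 * (x * z) + β7 * (x * y * z))
    (ℓ : ℕ) (ψ : ℕ → ℕ → ℕ → ℝ → ℝ → ℝ → ℝ)
    (hψtril : ∀ i j k : ℕ, i < 2 ^ ℓ → j < 2 ^ ℓ → k < 2 ^ ℓ →
      ∃ γ0 γ1 γ2 γ3 γ4 γ5 γ6 γ7 : ℝ,
      ∀ u v w : ℝ, ψ i j k u v w =
        γ0 + γ1 * u + γ2 * v + γ3 * w + γ4 * (u * v) + γ5 * (v * w)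
          + γ6 * (u * w) + γ7 * (u * v * w))
    (hψcorner : ∀ i j k : ℕ, i < 2 ^ ℓ → j < 2 ^ ℓ → k < 2 ^ ℓ →
      ∀ δ ε ζ : Fin 2,
      ψ i j k ((δ : ℕ) : ℝ) ((ε : ℕ) : ℝ) ((ζ : ℕ) : ℝ)
        = f (((i : ℝ) + ((δ : ℕ) : ℝ)) / 2 ^ ℓ)
            (((j : ℝ) + ((ε : ℕ) : ℝ)) / 2 ^ ℓ)
            (((k : ℝ) + ((ζ : ℕ) : ℝ)) / 2 ^ ℓ)) :
    volume {p : ℝ × ℝ × ℝ | p.1 ∈ Set.Icc (0 : ℝ) 1 ∧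
        p.2.1 ∈ Set.Icc (0 : ℝ) 1 ∧ p.2.2 ∈ Set.Icc (0 : ℝ) 1 ∧
        0 < f p.1 p.2.1 p.2.2}
      = ((8 : ℝ≥0∞) ^ ℓ)⁻¹ * ∑ i ∈ Finset.range (2 ^ ℓ),
          ∑ j ∈ Finset.range (2 ^ ℓ), ∑ k ∈ Finset.range (2 ^ ℓ),
            volume {p : ℝ × ℝ × ℝ | p.1 ∈ Set.Icc (0 : ℝ) 1 ∧
              p.2.1 ∈ Set.Icc (0 : ℝ) 1 ∧ p.2.2 ∈ Set.Icc (0 : ℝ) 1 ∧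
              0 < ψ i j k p.1 p.2.1 p.2.2} := by
  have hf_tri : IsTrilinear f := ⟨β0, β1, β2, β3, β4, β5, β6, β7, hf⟩
  have hψ : ∀ i < 2 ^ ℓ, ∀ j < 2 ^ ℓ, ∀ k < 2 ^ ℓ,
      ψ i j k = fun u v w => f ((i + u) / 2 ^ ℓ) ((j + v) / 2 ^ ℓ) ((k + w) / 2 ^ ℓ) := by
    intro i hi j hj k hk
    refine IsTrilinear.eq_of_corners (hψtril i j k hi hj hk) ?_ (hψcorner i j k hi hj hk)
    convert hf_tri.comp_affine (2 ^ ℓ)⁻¹ (i / 2 ^ ℓ) (2 ^ ℓ)⁻¹ (j / 2 ^ ℓ) (2 ^ ℓ)⁻¹ (k / 2 ^ ℓ)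
      using 6 <;> ring
  have h8 : (8 : ℝ≥0∞) ^ ℓ = ENNReal.ofReal ((2 ^ ℓ) ^ 3) := by
    rw [ENNReal.ofReal_pow (by positivity), ENNReal.ofReal_pow zero_le_two, ← pow_mul, mul_comm,
      pow_mul]
    norm_num
  simp only [setOf_mem_prod3_and, volume_Icc_prod3_inter_eq_Ico]
  rw [volume_Ico_cube_inter_eq_sum_cells (Nat.two_pow_pos ℓ)
    (measurableSet_lt measurable_const hf_tri.continuous.measurable)]
  simp only [Finset.mul_sum, Nat.cast_pow, Nat.cast_ofNat]
  refine Finset.sum_congr rfl fun i hi => Finset.sum_congr rfl fun j hj =>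
    Finset.sum_congr rfl fun k hk => ?_
  rw [Finset.mem_range] at hi hj hk
  have hcell := volume_Ico_cube_inter_preimage (by positivity : (0 : ℝ) < 2 ^ ℓ) i j k
    {p : ℝ × ℝ × ℝ | 0 < f p.1 p.2.1 p.2.2}
  rw [← h8] at hcell
  rw [hψ i hi j hj k hk, ← ENNReal.div_eq_inv_mul]
  -- after `hψ`, the set `{p | 0 < ψ i j k …}` is the preimage in `hcell` up to unfolding
  exact (ENNReal.eq_div_iff (by positivity) (by simp)).mpr hcell.symm
end

section
/- Let a, b, c, d, e, f, g, h be real numbers and ξ ∈ ℝ be such that a ξ + c > 0, e ξ + g > 0, f ξ + h > 0, and Ξ1 := (a f − b e) ξ² + (a h − b g + c f − d e) ξ + (c h − d g) > 0 (equivalently Ξ1 = (a ξ + c)(f ξ + h) − (b ξ + d)(e ξ + g)). Then ∫_0^{−(b ξ + d)/(a ξ + c)} [−ξ(a η + b) − c η − d] / [ξ(e η + f) + g η + h] dη = −Ξ1/(e ξ + g)² · [ log(f ξ + h) + log(a ξ + c) − log(Ξ1) ] + (b ξ + d)/(e ξ + g). -/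
/-!
Write `A = aξ + c`, `B = bξ + d`, `E = eξ + g`, `H = fξ + h`. The integrand is
`-(Aη + B) / (Eη + H)`, `Ξ1 = AH - BE`, and `-(A/E) η + Ξ1/E² · log (Eη + H)` is a primitive.
The denominator is affine in `η`, equal to `H > 0` at `η = 0` and to `Ξ1/A > 0` at `η1`, so it
stays positive on the interval of integration and the fundamental theorem of calculus applies.
-/

open Real Set intervalIntegral

theorem hasDerivAt_affine_div_affine_primitive {P Q E H x : ℝ} (hE : E ≠ 0)
    (hx : E * x + H ≠ 0) :
    HasDerivAt (fun x => P / E * x + (Q * E - P * H) / E ^ 2 * log (E * x + H))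
      ((P * x + Q) / (E * x + H)) x := by
  have hlin : HasDerivAt (fun x => E * x + H) E x := by
    simpa using ((hasDerivAt_id x).const_mul E).add_const H
  refine (((hasDerivAt_id' x).const_mul (P / E)).add
    ((hlin.log hx).const_mul ((Q * E - P * H) / E ^ 2))).congr_deriv ?_
  field_simp
  ring

theorem integral_affine_div_affine {P Q E H u v : ℝ} (hE : E ≠ 0)
    (hne : ∀ x ∈ uIcc u v, E * x + H ≠ 0) :
    ∫ x in u..v, (P * x + Q) / (E * x + H)
      = P / E * (v - u) + (Q * E - P * H) / E ^ 2 * (log (E * v + H) - log (E * u + H)) := by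
  have hint : IntervalIntegrable (fun x => (P * x + Q) / (E * x + H)) MeasureTheory.volume u v :=
    (ContinuousOn.div (by fun_prop) (by fun_prop) hne).intervalIntegrable
  rw [integral_eq_sub_of_hasDerivAt
    (fun x hx => hasDerivAt_affine_div_affine_primitive hE (hne x hx)) hint]
  ring

theorem affine_pos_of_mem_uIcc {E H u v x : ℝ} (hu : 0 < E * u + H) (hv : 0 < E * v + H)
    (hx : x ∈ uIcc u v) : 0 < E * x + H := by
  rcases le_total u v with huv | hvu
  · rw [uIcc_of_le huv] at hx
    rcases le_total 0 E with hE | hE <;> nlinarith [hx.1, hx.2]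
  · rw [uIcc_of_ge hvu] at hx
    rcases le_total 0 E with hE | hE <;> nlinarith [hx.1, hx.2]

/-- The inner η-integral of the paper's 3D cut-volume double integral
(Eq. (12)): integrating the interface graph
ζ(ξ,η) = (−ξ(aη+b) − cη − d)/(ξ(eη+f) + gη + h) in η from 0 to the zero
η1 = −(bξ+d)/(aξ+c) of the numerator yields the integrand of F(ξ)
(Eq. (15)), where Ξ1 = (af−be)ξ² + (ah−bg+cf−de)ξ + (ch−dg). -/
theorem inner_eta_integral
    (a b c d e f g h ξ : ℝ)
    (hac : 0 < a * ξ + c) (heg : 0 < e * ξ + g) (hfh : 0 < f * ξ + h)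
    (hΞ1 : 0 < (a * f - b * e) * ξ ^ 2 + (a * h - b * g + c * f - d * e) * ξ
      + (c * h - d * g)) :
    ∫ η in (0 : ℝ)..(-(b * ξ + d) / (a * ξ + c)),
        (-(ξ * (a * η + b)) - c * η - d) / (ξ * (e * η + f) + g * η + h)
      = -((a * f - b * e) * ξ ^ 2 + (a * h - b * g + c * f - d * e) * ξ
            + (c * h - d * g)) / (e * ξ + g) ^ 2 *
          (Real.log (f * ξ + h) + Real.log (a * ξ + c)
            - Real.log ((a * f - b * e) * ξ ^ 2
                + (a * h - b * g + c * f - d * e) * ξ + (c * h - d * g)))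
        + (b * ξ + d) / (e * ξ + g) := by
  have hΞ : (a * f - b * e) * ξ ^ 2 + (a * h - b * g + c * f - d * e) * ξ + (c * h - d * g)
      = (a * ξ + c) * (f * ξ + h) - (b * ξ + d) * (e * ξ + g) := by ring
  have hintegrand : ∀ η, (-(ξ * (a * η + b)) - c * η - d) / (ξ * (e * η + f) + g * η + h)
      = (-(a * ξ + c) * η + -(b * ξ + d)) / ((e * ξ + g) * η + (f * ξ + h)) := fun η => by
    ring_nf
  rw [hΞ] at hΞ1 ⊢
  set A := a * ξ + c
  set B := b * ξ + d
  set E := e * ξ + g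
  set H := f * ξ + h
  have hzero : E * (-B / A) + H = (A * H - B * E) / A := by field_simp; ring
  have hpos : ∀ x ∈ uIcc 0 (-B / A), 0 < E * x + H := fun x =>
    affine_pos_of_mem_uIcc (by simpa using hfh) (hzero ▸ div_pos hΞ1 hac)
  simp_rw [hintegrand]
  rw [integral_affine_div_affine heg.ne' fun x hx => (hpos x hx).ne', hzero,
    log_div hΞ1.ne' hac.ne']
  simp only [mul_zero, zero_add]
  field_simp
  ring
end
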